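/- arXiv:math/0207167 — 3 statements merged into one kernel-verified Lean document; each statement's English description precedes it below -/
import Mathlib

section
/- Let a_1,...,a_N be pairwise distinct elements of a field and t ≥ N an integer. Then ∑_{ν=1}^N a_ν^t / ∏_{μ≠ν}(a_ν - a_μ) equals the complete homogeneous symmetric polynomial of degree t - N + 1 in a_1,...,a_N, i.e., ∑_{i_1+...+i_N = t-N+1, i_j ≥ 0} a_1^{i_1} ⋯ a_N^{i_N}. -/
/-!
Reflecting the Lagrange identity `∑ i, basis i = 1` at degree `N - 1` gives the partial
fraction decomposition `∑ i, wᵢ ∏_{j ≠ i} (1 - a_j X) = X ^ (N - 1)`, where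
`wᵢ = ∏_{j ≠ i} (aᵢ - a_j)⁻¹` is the nodal weight. Multiplying by `∏ i, 1 / (1 - aᵢ X)` in `K⟦X⟧`
turns it into `X ^ (N - 1) * ∏ i, 1 / (1 - aᵢ X) = ∑ i, wᵢ / (1 - aᵢ X)`; the coefficient of
`X ^ t` is the complete homogeneous symmetric polynomial of degree `t - (N - 1)` on the left and
`∑ i, wᵢ aᵢ ^ t` on the right.
-/

open Finset Polynomial

namespace Polynomial

variable {R : Type*} [CommRing R]

theorem natDegree_prod_X_sub_C_le {ι : Type*} (s : Finset ι) (v : ι → R) :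
    (∏ i ∈ s, (X - C (v i))).natDegree ≤ #s :=
  (natDegree_prod_le s _).trans <| by
    simpa using sum_le_sum fun i (_ : i ∈ s) => natDegree_X_sub_C_le (v i)

theorem reflect_prod_X_sub_C {ι : Type*} (s : Finset ι) (v : ι → R) :
    reflect #s (∏ i ∈ s, (X - C (v i))) = ∏ i ∈ s, (1 - C (v i) * X) := by
  induction s using Finset.cons_induction with
  | empty => simp
  | cons i s hi ih =>
    rw [card_cons, prod_cons, prod_cons, add_comm,
      reflect_mul _ _ (natDegree_X_sub_C_le _) (natDegree_prod_X_sub_C_le _ _), ih,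
      reflect_sub, reflect_one_X, reflect_C, pow_one]

end Polynomial

namespace PowerSeries

theorem one_sub_C_mul_X_mul_mk_pow {R : Type*} [CommRing R] (r : R) :
    (1 - C r * X) * mk (r ^ ·) = 1 := by
  have h := congrArg (rescale r) (mk_one_mul_one_sub_eq_one R)
  rw [map_mul, map_sub, map_one, rescale_X, rescale_mk, mul_comm] at h
  simpa only [Pi.one_apply, mul_one] using h

theorem coeff_prod_mk_pow {R : Type*} [CommSemiring R] {ι : Type*} [DecidableEq ι]
    (s : Finset ι) (v : ι → R) (m : ℕ) :
    coeff m (∏ i ∈ s, mk (v i ^ ·)) = ∑ f ∈ piAntidiag s m, ∏ i ∈ s, v i ^ f i := by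
  rw [coeff_prod, finsuppAntidiag, sum_map]
  simp only [coeff_mk]
  exact sum_attach (piAntidiag s m) fun f => ∏ i ∈ s, v i ^ f i

end PowerSeries

namespace Lagrange

variable {F : Type*} [Field F] {ι : Type*} [DecidableEq ι] {s : Finset ι} {v : ι → F}

theorem reflect_basis {i : ι} (hi : i ∈ s) :
    reflect (#s - 1) (Lagrange.basis s v i) =
      C (nodalWeight s v i) * ∏ j ∈ s.erase i, (1 - C (v j) * X) := by
  rw [basis_eq_prod_sub_inv_mul_nodal_div hi, ← nodal_erase_eq_nodal_div hi, nodal,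
    reflect_C_mul, ← card_erase_of_mem hi, reflect_prod_X_sub_C]

theorem sum_C_nodalWeight_mul_prod_one_sub_C_mul_X (hvs : Set.InjOn v s) (hs : s.Nonempty) :
    ∑ i ∈ s, C (nodalWeight s v i) * ∏ j ∈ s.erase i, (1 - C (v j) * X) = X ^ (#s - 1) := by
  have h := congrArg (AddMonoidHom.mk' (reflect (#s - 1)) (reflect_add · · _)) (sum_basis hvs hs)
  rw [map_sum, AddMonoidHom.mk'_apply, reflect_one] at h
  rw [← h]
  exact sum_congr rfl fun i hi => (reflect_basis hi).symm

theorem X_pow_mul_prod_mk_pow (hvs : Set.InjOn v s) (hs : s.Nonempty) :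
    PowerSeries.X ^ (#s - 1) * ∏ i ∈ s, PowerSeries.mk (v i ^ ·) =
      ∑ i ∈ s, PowerSeries.C (nodalWeight s v i) * PowerSeries.mk (v i ^ ·) := by
  have h := congrArg Polynomial.coeToPowerSeries.ringHom
    (sum_C_nodalWeight_mul_prod_one_sub_C_mul_X hvs hs)
  simp only [map_sum, map_mul, map_prod, map_sub, map_one, map_pow,
    Polynomial.coeToPowerSeries.ringHom_apply, Polynomial.coe_C, Polynomial.coe_X] at h
  rw [← h, sum_mul]
  refine sum_congr rfl fun i hi => ?_
  rw [← mul_prod_erase s _ hi, mul_mul_mul_comm, ← prod_mul_distrib]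
  simp only [PowerSeries.one_sub_C_mul_X_mul_mk_pow, prod_const_one, mul_one]

theorem sum_nodalWeight_mul_pow (hvs : Set.InjOn v s) (hs : s.Nonempty) {t : ℕ}
    (ht : #s - 1 ≤ t) :
    ∑ i ∈ s, nodalWeight s v i * v i ^ t =
      ∑ f ∈ piAntidiag s (t - (#s - 1)), ∏ i ∈ s, v i ^ f i := by
  have h := congrArg (PowerSeries.coeff t) (X_pow_mul_prod_mk_pow hvs hs)
  rw [PowerSeries.coeff_X_pow_mul', if_pos ht, PowerSeries.coeff_prod_mk_pow, map_sum,
    eq_comm] at h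
  simpa only [PowerSeries.coeff_C_mul, PowerSeries.coeff_mk] using h

end Lagrange

theorem stmt_3 {K : Type*} [Field K] (N : ℕ) (a : Fin N → K)
    (ha : Function.Injective a) (t : ℕ) (ht : N ≤ t) :
    ∑ ν : Fin N, a ν ^ t / ∏ μ ∈ Finset.univ.erase ν, (a ν - a μ) =
      ∑ i ∈ Finset.Nat.antidiagonalTuple N (t - N + 1), ∏ j, a j ^ i j := by
  rcases Nat.eq_zero_or_pos N with rfl | hN
  · simp [Finset.Nat.antidiagonalTuple_zero_succ]
  have hcard : #(univ : Finset (Fin N)) = N := card_fin N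
  rw [show t - N + 1 = t - (#(univ : Finset (Fin N)) - 1) by omega,
    ← piAntidiag_univ_fin_eq_antidiagonalTuple,
    ← Lagrange.sum_nodalWeight_mul_pow ha.injOn ⟨⟨0, hN⟩, mem_univ _⟩ (by omega)]
  refine sum_congr rfl fun ν _ => ?_
  rw [Lagrange.nodalWeight, prod_inv_distrib, div_eq_inv_mul]
end

section
/- Main formula: Let a_1 < a_2 < ... < a_N be non-negative integers, n ≥ 0 and θ ≥ 0. Let A(n,θ) be the number of (x_1,...,x_N) ∈ ℕ^N with ∑ a_ν x_ν = n and ∑ x_ν = θ. For each ν, let s_ν = n + ∑_{i=1}^ν a_i − (ν+θ) a_ν, and let B_ν(λ) denote the number of (x_1,...,x_{N-1}) ∈ ℕ^{N-1} with (a_ν−a_1)x_1 + ... + (a_ν−a_{ν-1})x_{ν-1} + (a_{ν+1}−a_ν)x_ν + ... + (a_N−a_ν)x_{N-1} = λ (with B_ν(λ) = 0 when λ < 0). Then A(n,θ) = ∑_{ν=1}^N (−1)^{ν−1} B_ν(s_ν). -/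
open Finset

section Aux

variable {N : ℕ} (a : Fin (N + 1) → ℕ) (n θ : ℕ)

/-- Solutions over ℤ with coordinates below `c` negative, at or above `c` nonnegative. -/
def Qset (c : ℕ) : Set (Fin (N + 1) → ℤ) :=
  {x | (∑ i, (a i : ℤ) * x i = n) ∧ (∑ i, x i = θ) ∧
    (∀ j : Fin (N + 1), (j : ℕ) < c → x j ≤ -1) ∧
    (∀ j : Fin (N + 1), c ≤ (j : ℕ) → 0 ≤ x j)}

/-- Like `Qset` but the coordinate at `c` is unconstrained. -/
def Zset (c : ℕ) : Set (Fin (N + 1) → ℤ) :=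
  {x | (∑ i, (a i : ℤ) * x i = n) ∧ (∑ i, x i = θ) ∧
    (∀ j : Fin (N + 1), (j : ℕ) < c → x j ≤ -1) ∧
    (∀ j : Fin (N + 1), c < (j : ℕ) → 0 ≤ x j)}

lemma Zset_eq_union (c : ℕ) (hc : c ≤ N) :
    Zset a n θ c = Qset a n θ c ∪ Qset a n θ (c + 1) := by
  ext x
  constructor
  · rintro ⟨h1, h2, h3, h4⟩
    by_cases hx : 0 ≤ x ⟨c, by omega⟩
    · left
      refine ⟨h1, h2, h3, fun j hj => ?_⟩
      rcases eq_or_lt_of_le hj with h | h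
      · have : j = ⟨c, by omega⟩ := by apply Fin.ext; simp [← h]
        rwa [this]
      · exact h4 j h
    · right
      refine ⟨h1, h2, fun j hj => ?_, fun j hj => h4 j (by omega)⟩
      rcases Nat.lt_succ_iff_lt_or_eq.mp hj with h | h
      · exact h3 j h
      · have : j = ⟨c, by omega⟩ := by apply Fin.ext; simp [h]
        rw [this]; omega
  · rintro (⟨h1, h2, h3, h4⟩ | ⟨h1, h2, h3, h4⟩)
    · exact ⟨h1, h2, h3, fun j hj => h4 j (le_of_lt hj)⟩
    · exact ⟨h1, h2, fun j hj => h3 j (by omega), fun j hj => h4 j (by omega)⟩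

lemma Qset_disjoint (c : ℕ) (hc : c ≤ N) :
    Disjoint (Qset a n θ c) (Qset a n θ (c + 1)) := by
  rw [Set.disjoint_left]
  rintro x ⟨_, _, _, h4⟩ ⟨_, _, h3', _⟩
  have h1 := h4 ⟨c, by omega⟩ (by simp)
  have h2 := h3' ⟨c, by omega⟩ (by simp)
  omega

lemma Qset_top_empty : Qset a n θ (N + 1) = ∅ := by
  ext x
  simp only [Set.mem_empty_iff_false, iff_false]
  rintro ⟨h1, h2, h3, h4⟩
  have hle : ∀ j : Fin (N + 1), x j ≤ -1 := fun j => h3 j j.isLt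
  have : ∑ i, x i ≤ ∑ _i : Fin (N + 1), (-1 : ℤ) :=
    Finset.sum_le_sum fun i _ => hle i
  simp at this
  omega

end Aux


variable {N : ℕ}

lemma central (a : Fin (N + 1) → ℕ) (ha : StrictMono a) (ν : Fin (N + 1))
    (x : Fin (N + 1) → ℤ) :
    ∑ i : Fin N, |((a (ν.succAbove i) : ℤ) - (a ν : ℤ))| *
      (if ν.succAbove i < ν then -1 - x (ν.succAbove i) else x (ν.succAbove i))
    = (∑ j, (a j : ℤ) * x j) - (a ν : ℤ) * (∑ j, x j)
      + (∑ j : Fin (N + 1), if j ≤ ν then (a j : ℤ) else 0) - ((ν : ℕ) + 1) * a ν := by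
  set F : Fin (N + 1) → ℤ := fun j => |((a j : ℤ) - a ν)| * (if j < ν then -1 - x j else x j)
    with hF
  have hFν : F ν = 0 := by simp [hF]
  have hsum : ∑ i : Fin N, F (ν.succAbove i) = ∑ j, F j := by
    rw [Fin.sum_univ_succAbove F ν, hFν, zero_add]
  have key : ∀ j : Fin (N + 1),
      F j = ((a j : ℤ) - a ν) * x j + (if j < ν then ((a j : ℤ) - a ν) else 0) := by
    intro j
    rcases lt_trichotomy j ν with h | h | h
    · have hab : (a j : ℤ) < a ν := by exact_mod_cast ha h
      rw [hF]
      simp only [if_pos h, abs_of_neg (by linarith : (a j : ℤ) - a ν < 0)]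
      ring
    · subst h; simp [hF]
    · have hab : (a ν : ℤ) < a j := by exact_mod_cast ha h
      have hj : ¬ j < ν := not_lt.mpr (le_of_lt h)
      rw [hF]
      simp only [if_neg hj, abs_of_pos (by linarith : (0:ℤ) < (a j : ℤ) - a ν)]
      simp [hj]
  calc ∑ i : Fin N, F (ν.succAbove i) = ∑ j, F j := hsum
    _ = ∑ j, (((a j : ℤ) - a ν) * x j) + ∑ j, (if j < ν then ((a j : ℤ) - a ν) else 0) := by
        rw [← Finset.sum_add_distrib]; exact Finset.sum_congr rfl fun j _ => key j
    _ = _ := by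
        have e1 : ∑ j, (((a j : ℤ) - a ν) * x j)
            = (∑ j, (a j : ℤ) * x j) - (a ν : ℤ) * (∑ j, x j) := by
          rw [Finset.mul_sum, ← Finset.sum_sub_distrib]
          exact Finset.sum_congr rfl fun j _ => by ring
        have e2 : ∑ j, (if j < ν then ((a j : ℤ) - a ν) else 0)
            = (∑ j : Fin (N + 1), if j ≤ ν then (a j : ℤ) else 0) - ((ν : ℕ) + 1) * a ν := by
          have e3 : ∀ j : Fin (N + 1), (if j < ν then ((a j : ℤ) - a ν) else 0)
              = (if j ≤ ν then (a j : ℤ) else 0) - (if j ≤ ν then (a ν : ℤ) else 0)   := by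
            intro j
            rcases lt_trichotomy j ν with h | h | h
            · simp [h, le_of_lt h]
            · subst h; simp
            · simp [not_lt_of_gt h, not_le_of_gt h]
          rw [Finset.sum_congr rfl fun j _ => e3 j, Finset.sum_sub_distrib]
          have e4 : ∑ j : Fin (N + 1), (if j ≤ ν then (a ν : ℤ) else 0)
              = ((ν : ℕ) + 1) * a ν := by
            rw [← Finset.sum_filter]
            have : Finset.filter (fun j : Fin (N + 1) => j ≤ ν) Finset.univ
                = Finset.Iic ν := by ext j; simp
            rw [this, Finset.sum_const, Fin.card_Iic]
            ring
          rw [e4]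
        rw [e1, e2]
        ring
variable {N : ℕ}

lemma B_finite (a : Fin (N + 1) → ℕ) (ha : StrictMono a) (ν : Fin (N + 1)) (lam : ℤ) :
    Finite {y : Fin N → ℕ //
      ∑ i : Fin N, |((a (ν.succAbove i) : ℤ) - (a ν : ℤ))| * (y i : ℤ) = lam} := by
  set w : Fin N → ℤ := fun i => |((a (ν.succAbove i) : ℤ) - (a ν : ℤ))| with hw
  have hw1 : ∀ i, 1 ≤ w i := by
    intro i
    have hne : a (ν.succAbove i) ≠ a ν := fun h => Fin.succAbove_ne ν i (ha.injective h)
    have : ((a (ν.succAbove i) : ℤ) - (a ν : ℤ)) ≠ 0 := by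
      intro h; apply hne; omega
    simp only [hw]
    rcases this.lt_or_gt with h | h
    · rw [abs_of_neg h]; omega
    · rw [abs_of_pos h]; omega
  have hbound : ∀ y : {y : Fin N → ℕ // ∑ i : Fin N, w i * (y i : ℤ) = lam},
      ∀ i, (y : Fin N → ℕ) i < lam.toNat + 1 := by
    rintro ⟨y, hy⟩ i
    simp only
    have hterm : ∀ j, j ∈ Finset.univ → (0:ℤ) ≤ w j * (y j : ℤ) := by
      intro j _
      exact mul_nonneg (by linarith [hw1 j]) (by positivity)
    have h1 : w i * (y i : ℤ) ≤ lam := by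
      rw [← hy]
      exact Finset.single_le_sum hterm (Finset.mem_univ i)
    have h2 : (y i : ℤ) ≤ w i * (y i : ℤ) := by
      nlinarith [hw1 i, Int.natCast_nonneg (y i)]
    have h0 : (0:ℤ) ≤ lam := le_trans (by positivity) h1
    have : (y i : ℤ) ≤ lam := le_trans h2 h1
    omega
  exact Finite.of_injective
    (fun y => (fun i => (⟨(y : Fin N → ℕ) i, hbound y i⟩ : Fin (lam.toNat + 1))))
    (by
      rintro ⟨y, hy⟩ ⟨y', hy'⟩ h
      ext i
      exact congrArg Fin.val (congrFun h i))

lemma card_Z_eq_B (a : Fin (N + 1) → ℕ) (ha : StrictMono a) (n θ : ℕ) (ν : Fin (N + 1)) :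
    Nat.card (Zset a n θ (ν : ℕ)) =
    Nat.card {y : Fin N → ℕ //
      ∑ i : Fin N, |((a (ν.succAbove i) : ℤ) - (a ν : ℤ))| * (y i : ℤ)
        = (n : ℤ) + (∑ i : Fin (N + 1), if i ≤ ν then (a i : ℤ) else 0)
          - (((ν : ℕ) + 1 + θ : ℕ) : ℤ) * a ν}
    ∧ (Zset a n θ (ν : ℕ)).Finite := by
  set lam : ℤ := (n : ℤ) + (∑ i : Fin (N + 1), if i ≤ ν then (a i : ℤ) else 0)
      - (((ν : ℕ) + 1 + θ : ℕ) : ℤ) * a ν with hlam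
  -- the `z`-vector attached to an `x`
  set z : (Fin (N + 1) → ℤ) → Fin N → ℤ := fun x i =>
    if ν.succAbove i < ν then -1 - x (ν.succAbove i) else x (ν.succAbove i) with hz
  have hznn : ∀ x ∈ Zset a n θ (ν : ℕ), ∀ i, 0 ≤ z x i := by
    rintro x ⟨h1, h2, h3, h4⟩ i
    by_cases h : ν.succAbove i < ν
    · have := h3 (ν.succAbove i) h
      simp only [hz, if_pos h]
      omega
    · have hne : ν.succAbove i ≠ ν := Fin.succAbove_ne ν i
      have hgt : ν < ν.succAbove i := lt_of_le_of_ne (not_lt.mp h) (Ne.symm hne)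
      have := h4 (ν.succAbove i) hgt
      simp only [hz, if_neg h]
      exact this
  have hzsum : ∀ x ∈ Zset a n θ (ν : ℕ),
      ∑ i : Fin N, |((a (ν.succAbove i) : ℤ) - (a ν : ℤ))| * z x i = lam := by
    rintro x ⟨h1, h2, h3, h4⟩
    rw [hz]
    rw [central a ha ν x, h1, h2, hlam]
    push_cast
    ring
  have hxν : ∀ x ∈ Zset a n θ (ν : ℕ), x ν = (θ : ℤ) - ∑ i : Fin N, x (ν.succAbove i) := by
    rintro x ⟨h1, h2, h3, h4⟩
    have := Fin.sum_univ_succAbove x ν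
    rw [h2] at this
    linarith
  have hfval : ∀ p : (Zset a n θ (ν : ℕ)),
      ∑ i : Fin N, |((a (ν.succAbove i) : ℤ) - (a ν : ℤ))| * (((z p.1 i).toNat : ℕ) : ℤ)
        = lam := by
    rintro ⟨x, hx⟩
    have : ∀ i, ((z x i).toNat : ℤ) = z x i := fun i => Int.toNat_of_nonneg (hznn x hx i)
    simp only [this]
    exact hzsum x hx
  set f : (Zset a n θ (ν : ℕ)) →
      {y : Fin N → ℕ //
        ∑ i : Fin N, |((a (ν.succAbove i) : ℤ) - (a ν : ℤ))| * (y i : ℤ) = lam} :=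
    fun p => ⟨fun i => (z p.1 i).toNat, hfval p⟩ with hfdef
  have hinj : Function.Injective f := by
    rintro ⟨x, hx⟩ ⟨x', hx'⟩ h
    simp only [hfdef, Subtype.mk.injEq] at h
    have hzz : ∀ i, z x i = z x' i := by
      intro i
      have := congrFun h i
      have e1 := Int.toNat_of_nonneg (hznn x hx i)
      have e2 := Int.toNat_of_nonneg (hznn x' hx' i)
      rw [← e1, ← e2, this]
    have hσ : ∀ i, x (ν.succAbove i) = x' (ν.succAbove i) := by
      intro i
      have := hzz i
      by_cases hlt : ν.succAbove i < ν
      · simp only [hz, if_pos hlt] at this; omega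
      · simp only [hz, if_neg hlt] at this; exact this
    have hν : x ν = x' ν := by
      rw [hxν x hx, hxν x' hx']
      exact congrArg _ (Finset.sum_congr rfl fun i _ => hσ i)
    apply Subtype.ext
    funext j
    rcases eq_or_ne j ν with rfl | hj
    · exact hν
    · obtain ⟨i, rfl⟩ := Fin.exists_succAbove_eq hj
      exact hσ i
  have hsurj : Function.Surjective f := by
    rintro ⟨y, hy⟩
    classical
    set u : Fin N → ℤ := fun i =>
      if ν.succAbove i < ν then -1 - (y i : ℤ) else (y i : ℤ) with hu
    set x : Fin (N + 1) → ℤ := fun j =>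
      if hj : j = ν then (θ : ℤ) - ∑ i : Fin N, u i
      else u (Fin.exists_succAbove_eq hj).choose with hxdef
    have hxσ : ∀ i : Fin N, x (ν.succAbove i) = u i := by
      intro i
      have hne : ν.succAbove i ≠ ν := Fin.succAbove_ne ν i
      simp only [hxdef, dif_neg hne]
      congr 1
      have hspec := (Fin.exists_succAbove_eq hne).choose_spec
      exact Fin.succAbove_right_injective hspec
    have hxn : x ν = (θ : ℤ) - ∑ i : Fin N, u i := by simp [hxdef]
    have hzx : ∀ i, z x i = (y i : ℤ) := by
      intro i
      by_cases hlt : ν.succAbove i < ν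
      · simp only [hz, if_pos hlt, hxσ i, hu, if_pos hlt]; ring
      · simp only [hz, if_neg hlt, hxσ i, hu, if_neg hlt]
    have h2 : ∑ j, x j = (θ : ℤ) := by
      rw [Fin.sum_univ_succAbove x ν, hxn]
      rw [Finset.sum_congr rfl fun i _ => hxσ i]
      ring
    have h1 : ∑ j, (a j : ℤ) * x j = (n : ℤ) := by
      have hc := central a ha ν x
      rw [Finset.sum_congr rfl (fun i _ => by rw [show
        (if ν.succAbove i < ν then -1 - x (ν.succAbove i) else x (ν.succAbove i)) = z x i
        from rfl, hzx i])] at hc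
      rw [hy, h2] at hc
      rw [hlam] at hc
      push_cast at hc
      linarith
    have hmem : x ∈ Zset a n θ (ν : ℕ) := by
      refine ⟨h1, h2, ?_, ?_⟩
      · intro j hjlt
        have hjne : j ≠ ν := by
          intro h; rw [h] at hjlt; exact lt_irrefl _ hjlt
        obtain ⟨i, rfl⟩ := Fin.exists_succAbove_eq hjne
        have hlt : ν.succAbove i < ν := hjlt
        rw [hxσ i, hu]
        simp only [if_pos hlt]
        have : (0:ℤ) ≤ (y i : ℤ) := by positivity
        omega
      · intro j hjgt
        have hjne : j ≠ ν := by
          intro h; rw [h] at hjgt; exact lt_irrefl _ hjgt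
        obtain ⟨i, rfl⟩ := Fin.exists_succAbove_eq hjne
        have hnlt : ¬ ν.succAbove i < ν := by
          intro h
          exact absurd (lt_trans h hjgt) (lt_irrefl _)
        rw [hxσ i, hu]
        simp only [if_neg hnlt]
        positivity
    refine ⟨⟨x, hmem⟩, ?_⟩
    simp only [hfdef]
    apply Subtype.ext
    funext i
    simp only [hzx i, Int.toNat_natCast]
  constructor
  · exact Nat.card_eq_of_bijective f ⟨hinj, hsurj⟩
  · rw [← Set.finite_coe_iff]
    have : Finite {y : Fin N → ℕ //
        ∑ i : Fin N, |((a (ν.succAbove i) : ℤ) - (a ν : ℤ))| * (y i : ℤ) = lam} :=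
      B_finite a ha ν lam
    exact Finite.of_injective f hinj

lemma card_Q0 (a : Fin (N + 1) → ℕ) (n θ : ℕ) :
    Nat.card {x : Fin (N + 1) → ℕ // ∑ i, a i * x i = n ∧ ∑ i, x i = θ}
      = Nat.card (Qset a n θ 0) := by
  refine Nat.card_eq_of_bijective (fun p => ⟨fun i => ((p : Fin (N + 1) → ℕ) i : ℤ), ?_⟩)
    ⟨?_, ?_⟩
  · obtain ⟨x, hx1, hx2⟩ := p
    refine ⟨?_, ?_, fun j hj => absurd hj (by omega), fun j _ => by positivity⟩
    · push_cast [← hx1]; rfl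
    · push_cast [← hx2]; rfl
  · rintro ⟨x, hx⟩ ⟨x', hx'⟩ h
    simp only [Subtype.mk.injEq] at h
    apply Subtype.ext
    funext i
    exact_mod_cast congrFun h i
  · rintro ⟨zf, hz1, hz2, _, hz4⟩
    have hnn : ∀ i, 0 ≤ zf i := fun i => hz4 i (by omega)
    have hcast : ∀ i, ((zf i).toNat : ℤ) = zf i := fun i => Int.toNat_of_nonneg (hnn i)
    refine ⟨⟨fun i => (zf i).toNat, ?_, ?_⟩, ?_⟩
    · have : ((∑ i, a i * (zf i).toNat : ℕ) : ℤ) = (n : ℤ) := by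
        push_cast
        rw [Finset.sum_congr rfl fun i _ => by rw [hcast i]]
        exact hz1
      exact_mod_cast this
    · have : ((∑ i, (zf i).toNat : ℕ) : ℤ) = (θ : ℤ) := by
        push_cast
        rw [Finset.sum_congr rfl fun i _ => by rw [hcast i]]
        exact hz2
      exact_mod_cast this
    · apply Subtype.ext
      funext i
      exact hcast i

lemma telescope (g : ℕ → ℤ) : ∀ M : ℕ,
    ∑ k ∈ Finset.range (M + 1), (-1 : ℤ) ^ k * (g k + g (k + 1))
      = g 0 + (-1 : ℤ) ^ M * g (M + 1)
  | 0 => by simp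
  | (M + 1) => by
    rw [Finset.sum_range_succ, telescope g M]
    ring

/-- Main formula: `A(n,θ) = ∑_{ν} (-1)^{ν-1} B_ν(s_ν)` (here `ν` is 0-indexed). -/
theorem stmt_8 (N : ℕ) (a : Fin (N + 1) → ℕ) (ha : StrictMono a) (n θ : ℕ)
    (A : ℕ)
    (hA : A = Nat.card {x : Fin (N + 1) → ℕ // ∑ i, a i * x i = n ∧ ∑ i, x i = θ})
    (s : Fin (N + 1) → ℤ)
    (hs : ∀ ν, s ν = (n : ℤ) + (∑ i : Fin (N + 1), if i ≤ ν then (a i : ℤ) else 0)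
      - (((ν : ℕ) + 1 + θ : ℕ) : ℤ) * a ν)
    (B : Fin (N + 1) → ℤ → ℕ)
    (hB : ∀ ν lam, B ν lam =
      Nat.card {x : Fin N → ℕ //
        ∑ i : Fin N, |((a (ν.succAbove i) : ℤ) - (a ν : ℤ))| * (x i : ℤ) = lam}) :
    (A : ℤ) = ∑ ν : Fin (N + 1), (-1 : ℤ) ^ (ν : ℕ) * B ν (s ν) := by
  set q : ℕ → ℤ := fun c => ((Qset a n θ c).ncard : ℤ) with hq
  have hBZ : ∀ ν : Fin (N + 1), (B ν (s ν) : ℤ) = q ν + q ((ν : ℕ) + 1) := by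
    intro ν
    have hcz := card_Z_eq_B a ha n θ ν
    have hcard : (B ν (s ν) : ℤ) = ((Zset a n θ (ν : ℕ)).ncard : ℤ) := by
      rw [hB, hs, ← hcz.1, Nat.card_coe_set_eq]
    have hun := Zset_eq_union a n θ (ν : ℕ) (Nat.lt_succ_iff.mp ν.isLt)
    have hfin : (Qset a n θ (ν : ℕ) ∪ Qset a n θ ((ν : ℕ) + 1)).Finite := by
      rw [← hun]; exact hcz.2
    rw [hcard, hun,
      Set.ncard_union_eq (Qset_disjoint a n θ (ν : ℕ) (Nat.lt_succ_iff.mp ν.isLt))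
        (hfin.subset Set.subset_union_left)
        (hfin.subset Set.subset_union_right)]
    push_cast
    rfl
  calc (A : ℤ) = q 0 := by
        rw [hA, card_Q0 a n θ, Nat.card_coe_set_eq, hq]
    _ = q 0 + (-1 : ℤ) ^ N * q (N + 1) := by
        have : q (N + 1) = 0 := by
          rw [hq]; simp [Qset_top_empty a n θ]
        rw [this]; ring
    _ = ∑ k ∈ Finset.range (N + 1), (-1 : ℤ) ^ k * (q k + q (k + 1)) :=
        (telescope q N).symm
    _ = ∑ ν : Fin (N + 1), (-1 : ℤ) ^ (ν : ℕ) * (q (ν : ℕ) + q ((ν : ℕ) + 1)) :=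
        (Fin.sum_univ_eq_sum_range (fun k => (-1 : ℤ) ^ k * (q k + q (k + 1))) (N + 1)).symm
    _ = ∑ ν : Fin (N + 1), (-1 : ℤ) ^ (ν : ℕ) * B ν (s ν) := by
        exact Finset.sum_congr rfl fun ν _ => by rw [hBZ ν]
end

section
/- Let c_1,...,c_m be positive integers with gcd(c_1,...,c_m) = 1, and let B(λ) be the number of (x_1,...,x_m) ∈ ℕ^m with ∑ c_i x_i = λ. Then B(λ) ~ λ^{m−1} / ((m−1)! · c_1 ⋯ c_m) as λ → ∞, i.e., the limit of B(λ)·(m−1)!·c_1⋯c_m / λ^{m−1} as λ → ∞ equals 1. -/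
/-!
Let `S(n)` count the solutions of `∑ cᵢ xᵢ ≤ n`. Slicing by the first coordinate writes `S` as a
sum of counts in one dimension less over the points `n - c₀ k`; comparing such sums with
integrals of `t ^ (m - 1)` gives `n ^ m ≤ m! ∏ cᵢ S(n) ≤ (n + ∑ cᵢ) ^ m`.

Since the `cᵢ` are coprime, every `d ≥ n₀` is a non-negative combination of them, and adding a
fixed representation of `d` injects the solutions for `n` into those for `n + d`. Hence `B` is
monotone along shifts `≥ n₀`, so that `L • B(n)` is squeezed between increments of `S` over
windows of length `L` placed just above or just below `n`. For `L = ⌊√n⌋`, which tends to infinity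
but is `o(n)`, the bounds on `S` force `(m - 1)! ∏ cᵢ B(n) / n ^ (m - 1) → 1`.
-/

open Finset Filter Topology
open scoped Nat

section PowGap

variable {R : Type*} [CommSemiring R] [PartialOrder R] [IsOrderedRing R] {b d : R}

theorem pow_succ_add_mul_le_add_pow_succ (hb : 0 ≤ b) (hd : 0 ≤ d) (p : ℕ) :
    b ^ (p + 1) + (p + 1) * d * b ^ p ≤ (b + d) ^ (p + 1) := by
  induction p with
  | zero => simp
  | succ p ih =>
    push_cast
    calc b ^ (p + 1 + 1) + (p + 1 + 1) * d * b ^ (p + 1)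
        ≤ b ^ (p + 1 + 1) + (p + 1 + 1) * d * b ^ (p + 1) + (p + 1) * d ^ 2 * b ^ p :=
          le_add_of_nonneg_right <| mul_nonneg
            (mul_nonneg (add_nonneg p.cast_nonneg zero_le_one) (pow_nonneg hd 2)) (pow_nonneg hb p)
      _ = (b ^ (p + 1) + (p + 1) * d * b ^ p) * (b + d) := by ring
      _ ≤ (b + d) ^ (p + 1) * (b + d) := by gcongr
      _ = (b + d) ^ (p + 1 + 1) := by ring

theorem add_pow_succ_le_pow_succ_add_mul (hb : 0 ≤ b) (hd : 0 ≤ d) (p : ℕ) :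
    (b + d) ^ (p + 1) ≤ b ^ (p + 1) + (p + 1) * d * (b + d) ^ p := by
  induction p with
  | zero => simp
  | succ p ih =>
    have hpow : b ^ (p + 1) ≤ (b + d) ^ (p + 1) :=
      pow_le_pow_left₀ hb (le_add_of_nonneg_right hd) _
    push_cast
    calc (b + d) ^ (p + 1 + 1) = (b + d) ^ (p + 1) * (b + d) := by ring
      _ ≤ (b ^ (p + 1) + (p + 1) * d * (b + d) ^ p) * (b + d) := by gcongr
      _ = b ^ (p + 1 + 1) + d * b ^ (p + 1) + (p + 1) * d * (b + d) ^ (p + 1) := by ring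
      _ ≤ b ^ (p + 1 + 1) + d * (b + d) ^ (p + 1) + (p + 1) * d * (b + d) ^ (p + 1) := by
          gcongr
      _ = b ^ (p + 1 + 1) + (p + 1 + 1) * d * (b + d) ^ (p + 1) := by ring

end PowGap

section Telescope

variable {M : Type*} [AddCommMonoid M] [PartialOrder M] [IsOrderedAddMonoid M] {f g : ℕ → M}
  {N : ℕ}

theorem le_add_sum_range_of_le_succ_add (h : ∀ k < N, f k ≤ f (k + 1) + g k) :
    f 0 ≤ f N + ∑ k ∈ range N, g k := by
  induction N with
  | zero => simp
  | succ N ih =>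
    calc f 0 ≤ f N + ∑ k ∈ range N, g k := ih fun k hk => h k (by omega)
      _ ≤ f (N + 1) + g N + ∑ k ∈ range N, g k := by gcongr; exact h N (by omega)
      _ = f (N + 1) + ∑ k ∈ range (N + 1), g k := by rw [sum_range_succ]; abel

theorem add_sum_range_le_of_succ_add_le (h : ∀ k < N, f (k + 1) + g k ≤ f k) :
    f N + ∑ k ∈ range N, g k ≤ f 0 :=
  le_add_sum_range_of_le_succ_add (M := Mᵒᵈ) h

end Telescope

theorem pow_succ_le_sum_range_pow (p : ℕ) {c : ℕ} (hc : 0 < c) (n : ℕ) :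
    n ^ (p + 1) ≤ (p + 1) * c * ∑ k ∈ range (n / c + 1), (n - c * k) ^ p := by
  have hstep : ∀ k < n / c + 1,
      (n - c * k) ^ (p + 1) ≤ (n - c * (k + 1)) ^ (p + 1) + (p + 1) * c * (n - c * k) ^ p := by
    intro k _
    obtain ⟨d, hdc, hd⟩ : ∃ d ≤ c, n - c * k = n - c * (k + 1) + d :=
      ⟨n - c * k - (n - c * (k + 1)), by rw [mul_add_one]; omega, by rw [mul_add_one]; omega⟩
    rw [hd]
    calc (n - c * (k + 1) + d) ^ (p + 1)
        ≤ (n - c * (k + 1)) ^ (p + 1) + (p + 1) * d * (n - c * (k + 1) + d) ^ p := by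
          exact_mod_cast add_pow_succ_le_pow_succ_add_mul (Nat.zero_le _) (Nat.zero_le _) p
      _ ≤ _ := by gcongr
  have hlast : n - c * (n / c + 1) = 0 := by
    have := Nat.lt_mul_div_succ n hc
    omega
  simpa [hlast, mul_sum] using le_add_sum_range_of_le_succ_add hstep

theorem sum_range_pow_le_pow_succ (p : ℕ) {c : ℕ} (hc : 0 < c) (n C : ℕ) :
    (p + 1) * c * ∑ k ∈ range (n / c + 1), (n - c * k + C) ^ p ≤ (n + C + c) ^ (p + 1) := by
  have hstep : ∀ k < n / c + 1,
      (n + C + c - c * (k + 1)) ^ (p + 1) + (p + 1) * c * (n - c * k + C) ^ p ≤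
        (n + C + c - c * k) ^ (p + 1) := by
    intro k hk
    have hck : c * k ≤ n := mul_comm c k ▸ Nat.mul_le_of_le_div c k n (by omega)
    rw [mul_add_one, show n + C + c - c * k = n - c * k + C + c by omega,
      show n + C + c - (c * k + c) = n - c * k + C by omega]
    exact_mod_cast pow_succ_add_mul_le_add_pow_succ (Nat.zero_le _) (Nat.zero_le _) p
  rw [mul_sum]
  exact le_add_self.trans <| add_sum_range_le_of_succ_add_le
    (f := fun k => (n + C + c - c * k) ^ (p + 1)) (g := fun k => (p + 1) * c * (n - c * k + C) ^ p)
    hstep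

section Denumerant

variable {ι : Type*} [Fintype ι]

noncomputable def denumerant (c : ι → ℕ) (n : ℕ) : ℕ :=
  Nat.card {x : ι → ℕ // ∑ i, c i * x i = n}

noncomputable def denumerantLE (c : ι → ℕ) (n : ℕ) : ℕ :=
  Nat.card {x : ι → ℕ // ∑ i, c i * x i ≤ n}

variable {c : ι → ℕ}

theorem finite_setOf_sum_mul_le (hc : ∀ i, 0 < c i) (n : ℕ) :
    {x : ι → ℕ | ∑ i, c i * x i ≤ n}.Finite := by
  classical
  refine (Set.finite_Iic fun _ => n).subset fun x hx i => ?_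
  calc x i ≤ c i * x i := Nat.le_mul_of_pos_left _ (hc i)
    _ ≤ ∑ j, c j * x j := single_le_sum (f := fun j => c j * x j) (by simp) (mem_univ i)
    _ ≤ n := hx

theorem finite_sum_mul_eq (hc : ∀ i, 0 < c i) (n : ℕ) :
    Finite {x : ι → ℕ // ∑ i, c i * x i = n} :=
  ((finite_setOf_sum_mul_le hc n).subset fun _ hx => le_of_eq hx).to_subtype

theorem denumerantLE_eq_sum_range_denumerant (hc : ∀ i, 0 < c i) (n : ℕ) :
    denumerantLE c n = ∑ j ∈ range (n + 1), denumerant c j := by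
  have (j : Fin (n + 1)) := finite_sum_mul_eq hc j
  let e : {x : ι → ℕ // ∑ i, c i * x i ≤ n} ≃
      Σ j : Fin (n + 1), {x : ι → ℕ // ∑ i, c i * x i = j} :=
    { toFun x := ⟨⟨_, Nat.lt_succ_of_le x.2⟩, ⟨x.1, rfl⟩⟩
      invFun y := ⟨y.2.1, y.2.2.trans_le (Nat.le_of_lt_succ y.1.2)⟩
      left_inv _ := rfl
      right_inv := by
        rintro ⟨⟨j, hj⟩, x, hx⟩
        dsimp only at hx
        subst hx
        rfl }
  rw [denumerantLE, Nat.card_congr e, Nat.card_sigma]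
  exact Fin.sum_univ_eq_sum_range (denumerant c) (n + 1)

theorem denumerant_le_denumerant_add (hc : ∀ i, 0 < c i) {d : ℕ}
    (hd : d ∈ AddSubmonoid.closure (Set.range c)) (n : ℕ) :
    denumerant c n ≤ denumerant c (n + d) := by
  obtain ⟨a, rfl⟩ := AddSubmonoid.mem_closure_range_iff_of_fintype.1 hd
  have := finite_sum_mul_eq hc (n + ∑ i, a i • c i)
  refine Nat.card_le_card_of_injective (fun x => ⟨x.1 + a, ?_⟩) fun x y hxy => ?_
  · simp [mul_add, sum_add_distrib, x.2, mul_comm]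
  · ext i
    simpa using congr_fun (congr_arg Subtype.val hxy) i

theorem exists_forall_ge_mem_closure_range (hgcd : univ.gcd c = 1) :
    ∃ n₀, ∀ n ≥ n₀, n ∈ AddSubmonoid.closure (Set.range c) := by
  obtain ⟨n₀, hn₀⟩ := Nat.exists_mem_closure_of_ge (Set.range c)
  have hdvd : Nat.setGcd (Set.range c) ∣ 1 :=
    hgcd ▸ Finset.dvd_gcd fun i _ => Nat.setGcd_dvd_of_mem (Set.mem_range_self i)
  exact ⟨n₀, fun n hn => hn₀ n hn (hdvd.trans (one_dvd n))⟩

theorem denumerantLE_add (hc : ∀ i, 0 < c i) (a L : ℕ) :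
    denumerantLE c (a + L) = denumerantLE c a + ∑ k ∈ range L, denumerant c (a + 1 + k) := by
  rw [denumerantLE_eq_sum_range_denumerant hc, denumerantLE_eq_sum_range_denumerant hc,
    add_right_comm, sum_range_add]

section Window

variable (hc : ∀ i, 0 < c i) {n₀ : ℕ} (hn₀ : ∀ n ≥ n₀, n ∈ AddSubmonoid.closure (Set.range c))
include hc hn₀

theorem denumerantLE_add_mul_le_denumerantLE (n L : ℕ) :
    denumerantLE c (n + n₀) + L * denumerant c n ≤ denumerantLE c (n + n₀ + L) := by
  rw [denumerantLE_add hc (n + n₀) L]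
  gcongr
  calc L * denumerant c n = ∑ _k ∈ range L, denumerant c n := by simp
    _ ≤ _ := sum_le_sum fun k _ =>
      (denumerant_le_denumerant_add hc (hn₀ (n₀ + 1 + k) (by omega)) n).trans_eq
        (congr_arg _ (by omega))

theorem denumerantLE_le_add_mul_denumerant (n L : ℕ) :
    denumerantLE c (n + L) ≤ denumerantLE c n + L * denumerant c (n + L + n₀) := by
  rw [denumerantLE_add hc]
  gcongr
  calc _ ≤ ∑ _k ∈ range L, denumerant c (n + L + n₀) := sum_le_sum fun k hk =>
        (denumerant_le_denumerant_add hc (hn₀ (n₀ + (L - 1 - k)) (by omega)) _).trans_eq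
          (congr_arg _ (by rw [mem_range] at hk; omega))
    _ = L * denumerant c (n + L + n₀) := by simp

end Window

end Denumerant

section Recursion

variable {m : ℕ}

theorem denumerantLE_fin_zero (c : Fin 0 → ℕ) (n : ℕ) : denumerantLE c n = 1 := by
  simp [denumerantLE]

theorem denumerantLE_succ {c : Fin (m + 1) → ℕ} (hc : ∀ i, 0 < c i) (n : ℕ) :
    denumerantLE c n = ∑ k ∈ range (n / c 0 + 1), denumerantLE (Fin.tail c) (n - c 0 * k) := by
  have (k : Fin (n / c 0 + 1)) : Finite {y : Fin m → ℕ // ∑ i, Fin.tail c i * y i ≤ n - c 0 * k} :=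
    (finite_setOf_sum_mul_le (fun i : Fin m => hc i.succ) _).to_subtype
  have hsplit (x : Fin (m + 1) → ℕ) :
      ∑ i, c i * x i = c 0 * x 0 + ∑ i, Fin.tail c i * Fin.tail x i :=
    Fin.sum_univ_succ _
  let e : {x : Fin (m + 1) → ℕ // ∑ i, c i * x i ≤ n} ≃
      Σ k : Fin (n / c 0 + 1), {y : Fin m → ℕ // ∑ i, Fin.tail c i * y i ≤ n - c 0 * k} :=
    { toFun x :=
        have hx := hsplit x.1 ▸ x.2
        ⟨⟨x.1 0, Nat.lt_succ_of_le <| (Nat.le_div_iff_mul_le (hc 0)).2 <| by rw [mul_comm]; omega⟩,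
          ⟨Fin.tail x.1, by dsimp only; omega⟩⟩
      invFun y := ⟨Fin.cons y.1.1 y.2.1, by
        have hk : c 0 * y.1 ≤ n := mul_comm (c 0) _ ▸ Nat.mul_le_of_le_div _ _ _ (by omega)
        have hy := y.2.2
        rw [hsplit]
        simp only [Fin.cons_zero, Fin.tail_cons]
        omega⟩
      left_inv x := by simp
      right_inv := by rintro ⟨⟨k, hk⟩, y, hy⟩; rfl }
  rw [denumerantLE, Nat.card_congr e, Nat.card_sigma]
  exact Fin.sum_univ_eq_sum_range (fun k => denumerantLE (Fin.tail c) (n - c 0 * k)) _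

theorem factorial_mul_prod_mul_denumerantLE_succ {c : Fin (m + 1) → ℕ} (hc : ∀ i, 0 < c i)
    (n : ℕ) : (m + 1)! * (∏ i, c i) * denumerantLE c n = (m + 1) * c 0 *
      ∑ k ∈ range (n / c 0 + 1),
        m ! * (∏ i, Fin.tail c i) * denumerantLE (Fin.tail c) (n - c 0 * k) := by
  rw [denumerantLE_succ hc, Fin.prod_univ_succ, Nat.factorial_succ, mul_sum, mul_sum]
  refine sum_congr rfl fun k _ => ?_
  simp only [Fin.tail]
  ring

theorem pow_le_factorial_mul_prod_mul_denumerantLE {c : Fin m → ℕ} (hc : ∀ i, 0 < c i) (n : ℕ) :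
    n ^ m ≤ m ! * (∏ i, c i) * denumerantLE c n := by
  induction m generalizing n with
  | zero => simp [denumerantLE_fin_zero]
  | succ m ih =>
    rw [factorial_mul_prod_mul_denumerantLE_succ hc]
    calc n ^ (m + 1) ≤ (m + 1) * c 0 * ∑ k ∈ range (n / c 0 + 1), (n - c 0 * k) ^ m :=
          pow_succ_le_sum_range_pow m (hc 0) n
      _ ≤ _ := by gcongr; exact ih (fun i => hc i.succ) _

theorem factorial_mul_prod_mul_denumerantLE_le {c : Fin m → ℕ} (hc : ∀ i, 0 < c i) (n : ℕ) :
    m ! * (∏ i, c i) * denumerantLE c n ≤ (n + ∑ i, c i) ^ m := by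
  induction m generalizing n with
  | zero => simp [denumerantLE_fin_zero]
  | succ m ih =>
    rw [factorial_mul_prod_mul_denumerantLE_succ hc, Fin.sum_univ_succ]
    calc _ ≤ (m + 1) * c 0 * ∑ k ∈ range (n / c 0 + 1), (n - c 0 * k + ∑ i, Fin.tail c i) ^ m := by
          gcongr; exact ih (fun i => hc i.succ) _
      _ ≤ (n + ∑ i, Fin.tail c i + c 0) ^ (m + 1) := sum_range_pow_le_pow_succ m (hc 0) n _
      _ = _ := by rw [add_comm (c 0), add_assoc]; rfl

end Recursion

section DenumerantBounds

variable {p : ℕ} {c : Fin (p + 1) → ℕ} (hc : ∀ i, 0 < c i) {n₀ : ℕ}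
  (hn₀ : ∀ n ≥ n₀, n ∈ AddSubmonoid.closure (Set.range c))
include hc hn₀

theorem mul_denumerant_mul_le (n L : ℕ) :
    L * denumerant c n * (p ! * ∏ i, c i) ≤ (L + ∑ i, c i) * (n + n₀ + L + ∑ i, c i) ^ p := by
  set C := ∑ i, c i
  set D := (p + 1)! * ∏ i, c i
  have key : D * (L * denumerant c n) + (n + n₀) ^ (p + 1) ≤
      (n + n₀) ^ (p + 1) + (p + 1) * (L + C) * (n + n₀ + L + C) ^ p :=
    calc D * (L * denumerant c n) + (n + n₀) ^ (p + 1)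
        ≤ D * (L * denumerant c n) + D * denumerantLE c (n + n₀) := by
          gcongr; exact pow_le_factorial_mul_prod_mul_denumerantLE hc _
      _ = D * (denumerantLE c (n + n₀) + L * denumerant c n) := by ring
      _ ≤ D * denumerantLE c (n + n₀ + L) := by
          gcongr; exact denumerantLE_add_mul_le_denumerantLE hc hn₀ n L
      _ ≤ (n + n₀ + (L + C)) ^ (p + 1) := by
          rw [← add_assoc]; exact factorial_mul_prod_mul_denumerantLE_le hc _
      _ ≤ _ := by
          simpa [add_assoc] using
            add_pow_succ_le_pow_succ_add_mul (Nat.zero_le (n + n₀)) (Nat.zero_le (L + C)) p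
  refine Nat.le_of_mul_le_mul_left ?_ (by omega : 0 < p + 1)
  calc (p + 1) * (L * denumerant c n * (p ! * ∏ i, c i)) = D * (L * denumerant c n) := by
        simp only [D, Nat.factorial_succ]; ring
    _ ≤ _ := by linarith

theorem mul_pow_le_mul_denumerant_mul (n L : ℕ) :
    (L - ∑ i, c i) * (n + ∑ i, c i) ^ p ≤ L * denumerant c (n + L + n₀) * (p ! * ∏ i, c i) := by
  set C := ∑ i, c i
  set D := (p + 1)! * ∏ i, c i
  rcases le_or_gt L C with hL | hL
  · simp [Nat.sub_eq_zero_of_le hL]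
  obtain ⟨d, rfl⟩ := Nat.exists_eq_add_of_le hL.le
  have key : (n + C) ^ (p + 1) + (p + 1) * d * (n + C) ^ p ≤
      (n + C) ^ (p + 1) + D * ((C + d) * denumerant c (n + (C + d) + n₀)) :=
    calc (n + C) ^ (p + 1) + (p + 1) * d * (n + C) ^ p ≤ (n + (C + d)) ^ (p + 1) := by
          simpa [add_assoc] using
            pow_succ_add_mul_le_add_pow_succ (Nat.zero_le (n + C)) (Nat.zero_le d) p
      _ ≤ D * denumerantLE c (n + (C + d)) := pow_le_factorial_mul_prod_mul_denumerantLE hc _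
      _ ≤ D * (denumerantLE c n + (C + d) * denumerant c (n + (C + d) + n₀)) := by
          gcongr; exact denumerantLE_le_add_mul_denumerant hc hn₀ n _
      _ = D * denumerantLE c n + D * ((C + d) * denumerant c (n + (C + d) + n₀)) := by ring
      _ ≤ _ := by gcongr; exact factorial_mul_prod_mul_denumerantLE_le hc _
  refine Nat.le_of_mul_le_mul_left ?_ (by omega : 0 < p + 1)
  calc (p + 1) * ((C + d - C) * (n + C) ^ p) = (p + 1) * d * (n + C) ^ p := by
        rw [Nat.add_sub_cancel_left]; ring
    _ ≤ D * ((C + d) * denumerant c (n + (C + d) + n₀)) := by linarith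
    _ = _ := by simp only [D, Nat.factorial_succ]; ring

end DenumerantBounds

section RealBounds

variable {p : ℕ} {c : Fin (p + 1) → ℕ} (hc : ∀ i, 0 < c i) {n₀ : ℕ}
  (hn₀ : ∀ n ≥ n₀, n ∈ AddSubmonoid.closure (Set.range c))
include hc hn₀

theorem denumerant_mul_div_pow_le {n L : ℕ} (hL : 0 < L) (hn : 0 < n) :
    (denumerant c n : ℝ) * p ! * (∏ i, (c i : ℝ)) / n ^ p ≤
      (1 + (∑ i, (c i : ℝ)) / L) * ((n + n₀ + L + ∑ i, (c i : ℝ)) / n) ^ p := by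
  have h : (L : ℝ) * denumerant c n * (p ! * ∏ i, (c i : ℝ)) ≤
      (L + ∑ i, (c i : ℝ)) * (n + n₀ + L + ∑ i, (c i : ℝ)) ^ p := by
    exact_mod_cast mul_denumerant_mul_le hc hn₀ n L
  rw [one_add_div (by positivity), div_pow, div_mul_div_comm,
    div_le_div_iff₀ (by positivity) (by positivity)]
  calc (denumerant c n : ℝ) * p ! * (∏ i, (c i : ℝ)) * (L * n ^ p)
      = L * denumerant c n * (p ! * ∏ i, (c i : ℝ)) * n ^ p := by ring
    _ ≤ _ := by gcongr

theorem le_denumerant_mul_div_pow {n L : ℕ} (hCL : ∑ i, c i ≤ L) (hL : 0 < L) (hn : L + n₀ ≤ n) :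
    (1 - (∑ i, (c i : ℝ)) / L) * ((n - L - n₀ + ∑ i, (c i : ℝ)) / n) ^ p ≤
      (denumerant c n : ℝ) * p ! * (∏ i, (c i : ℝ)) / n ^ p := by
  obtain ⟨u, rfl⟩ : ∃ u, n = u + L + n₀ := ⟨n - L - n₀, by omega⟩
  have h : ((L : ℝ) - ∑ i, (c i : ℝ)) * (u + ∑ i, (c i : ℝ)) ^ p ≤
      L * denumerant c (u + L + n₀) * (p ! * ∏ i, (c i : ℝ)) := by
    have := mul_pow_le_mul_denumerant_mul hc hn₀ u L
    rw [← Nat.cast_le (α := ℝ)] at this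
    push_cast [Nat.cast_sub hCL] at this
    exact this
  rw [one_sub_div (by positivity), div_pow, div_mul_div_comm,
    div_le_div_iff₀ (by positivity) (by positivity)]
  push_cast
  calc ((L : ℝ) - ∑ i, (c i : ℝ)) * (u + L + n₀ - L - n₀ + ∑ i, (c i : ℝ)) ^ p * (u + L + n₀) ^ p
      = ((L : ℝ) - ∑ i, (c i : ℝ)) * (u + ∑ i, (c i : ℝ)) ^ p * (u + L + n₀) ^ p := by ring_nf
    _ ≤ L * denumerant c (u + L + n₀) * (p ! * ∏ i, (c i : ℝ)) * (u + L + n₀) ^ p := by gcongr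
    _ = _ := by ring

end RealBounds

theorem Nat.sqrt_add_le_of_lt_sqrt {n k : ℕ} (h : k < Nat.sqrt n) : Nat.sqrt n + k ≤ n := by
  nlinarith [Nat.sqrt_le n]

theorem tendsto_natSqrt_atTop : Tendsto Nat.sqrt atTop atTop :=
  tendsto_atTop_atTop.2 fun b => ⟨b * b, fun _ hn => Nat.le_sqrt.2 hn⟩

theorem tendsto_natSqrt_div_self : Tendsto (fun n : ℕ => (Nat.sqrt n : ℝ) / n) atTop (𝓝 0) := by
  have hinv : Tendsto (fun n : ℕ => 1 / (Nat.sqrt n : ℝ)) atTop (𝓝 0) :=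
    tendsto_const_nhds.div_atTop (tendsto_natCast_atTop_atTop.comp tendsto_natSqrt_atTop)
  refine squeeze_zero' (Eventually.of_forall fun n => by positivity) ?_ hinv
  filter_upwards [tendsto_natSqrt_atTop.eventually_ge_atTop 1] with n hn
  have hsq : (Nat.sqrt n : ℝ) * Nat.sqrt n ≤ n := by exact_mod_cast Nat.sqrt_le n
  have hs : (0 : ℝ) < Nat.sqrt n := by exact_mod_cast hn
  have hs1 : (1 : ℝ) ≤ Nat.sqrt n := by exact_mod_cast hn
  have hn' : (0 : ℝ) < n := hs.trans_le (by nlinarith)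
  rw [div_le_div_iff₀ hn' hs]
  linarith

theorem tendsto_one_add_div_natSqrt_mul_div_pow (a b e : ℝ) (p : ℕ) :
    Tendsto (fun n : ℕ => (1 + a / Nat.sqrt n) * ((n + e * Nat.sqrt n + b) / n) ^ p)
      atTop (𝓝 1) := by
  have h₁ : Tendsto (fun n : ℕ => a / Nat.sqrt n) atTop (𝓝 0) :=
    tendsto_const_nhds.div_atTop (tendsto_natCast_atTop_atTop.comp tendsto_natSqrt_atTop)
  have h₂ : Tendsto (fun n : ℕ => (n + e * Nat.sqrt n + b) / n) atTop (𝓝 1) := by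
    have hb : Tendsto (fun n : ℕ => b / n) atTop (𝓝 0) :=
      tendsto_const_nhds.div_atTop tendsto_natCast_atTop_atTop
    refine (by simpa using (tendsto_natSqrt_div_self.const_mul e).add hb |>.const_add 1 :
      Tendsto (fun n : ℕ => 1 + (e * (Nat.sqrt n / n) + b / n)) atTop (𝓝 1)).congr' ?_
    filter_upwards [eventually_gt_atTop 0] with n hn
    field_simp
    ring
  simpa using (h₁.const_add 1).mul (h₂.pow p)

open Filter in
theorem stmt_11 (m : ℕ) (hm : 1 ≤ m) (c : Fin m → ℕ) (hc : ∀ i, 0 < c i)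
    (hgcd : Finset.univ.gcd c = 1)
    (B : ℕ → ℕ)
    (hB : ∀ lam, B lam = Nat.card {x : Fin m → ℕ // ∑ i, c i * x i = lam}) :
    Tendsto (fun lam : ℕ =>
        ((B lam : ℝ) * (Nat.factorial (m - 1)) * ∏ i, (c i : ℝ)) / (lam : ℝ) ^ (m - 1))
      atTop (nhds 1) := by
  obtain ⟨p, rfl⟩ : ∃ p, m = p + 1 := ⟨m - 1, by omega⟩
  obtain ⟨n₀, hn₀⟩ := exists_forall_ge_mem_closure_range hgcd
  obtain rfl : B = denumerant c := funext hB
  simp only [Nat.add_sub_cancel]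
  have hsqrt := tendsto_natSqrt_atTop.eventually_ge_atTop (∑ i, c i + n₀ + 1)
  refine tendsto_of_tendsto_of_tendsto_of_le_of_le'
    (tendsto_one_add_div_natSqrt_mul_div_pow (-∑ i, (c i : ℝ)) (∑ i, (c i : ℝ) - n₀) (-1) p)
    (tendsto_one_add_div_natSqrt_mul_div_pow (∑ i, (c i : ℝ)) (n₀ + ∑ i, (c i : ℝ)) 1 p) ?_ ?_
  · filter_upwards [hsqrt] with n hn
    refine (Eq.le ?_).trans (le_denumerant_mul_div_pow hc hn₀ (by omega) (by omega)
      (Nat.sqrt_add_le_of_lt_sqrt (by omega)))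
    ring
  · filter_upwards [hsqrt] with n hn
    refine (denumerant_mul_div_pow_le hc hn₀ (n := n) (L := Nat.sqrt n) (by omega) ?_).trans_eq ?_
    · have := Nat.sqrt_add_le_of_lt_sqrt (n := n) (k := n₀) (by omega)
      omega
    · ring
end
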